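/- arXiv:2408.15516 — 2 statements merged into one kernel-verified Lean document; each statement's English description precedes it below -/
import Mathlib

section
/- Let 0 < β < 1 and 0 < θ < π, and set γ = θ/2 − arcsin(√β · sin(θ/2)). Then 0 < γ < θ/2, and the point on the Apollonius circle of center (−βR/(1−β), 0) and radius √β·R/(1−β) at angle γ (measured from the center, i.e. the point (−βR/(1−β) + (√β·R/(1−β))·cos γ, (√β·R/(1−β))·sin γ)) lies on the ray from the origin making angle θ/2 with the positive x-axis; equivalently tan(θ/2) = ((√β/(1−β))·sin γ) / ((√β/(1−β))·cos γ − β/(1−β)). -/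
/-!
Write `s = √β`, `t = θ / 2`, `a = arcsin (s sin t)`, so that `γ = t - a`. Since `0 < s sin t < sin t`,
`0 < a < t`. Expanding `sin a = sin (t - γ)` turns `sin a = s sin t` into
`sin t (cos γ - s) = cos t sin γ`, i.e. `tan t = sin γ / (cos γ - s)`; multiplying numerator and
denominator by `s / (1 - β)` and using `s² = β` gives the stated form.
-/

open Real

namespace Real

lemma arcsin_mul_sin_mem_Ioo {s t : ℝ} (hs0 : 0 < s) (hs1 : s < 1) (ht0 : 0 < t) (ht : t ≤ π / 2) :
    arcsin (s * sin t) ∈ Set.Ioo 0 t := by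
  have hsin : 0 < sin t := sin_pos_of_pos_of_lt_pi ht0 (by linarith [pi_pos])
  refine ⟨arcsin_pos.mpr (mul_pos hs0 hsin), ?_⟩
  rw [arcsin_lt_iff_lt_sin' ⟨by linarith, ht⟩]
  exact mul_lt_of_lt_one_left hsin hs1

lemma sin_mul_cos_sub_sub_eq {s t a : ℝ} (ha : sin a = s * sin t) :
    sin t * (cos (t - a) - s) = cos t * sin (t - a) := by
  have : sin (t - (t - a)) = sin t * cos (t - a) - cos t * sin (t - a) := sin_sub _ _
  rw [sub_sub_cancel, ha] at this
  linear_combination -this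

lemma tan_eq_sin_sub_div {s t a : ℝ} (ha : sin a = s * sin t) (hcos : cos t ≠ 0)
    (hsin : sin (t - a) ≠ 0) :
    tan t = sin (t - a) / (cos (t - a) - s) := by
  have key := sin_mul_cos_sub_sub_eq ha
  have hden : cos (t - a) - s ≠ 0 := by
    rintro h
    rw [h, mul_zero] at key
    exact mul_ne_zero hcos hsin key.symm
  rw [tan_eq_sin_div_cos, div_eq_div_iff hcos hden]
  linear_combination key

end Real

lemma mul_div_mul_sub_mul {K : Type*} [Field K] {c x y s : K} (hc : c ≠ 0) : c * x / (c * y - c * s) = x / (y - s) := by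
  rw [← mul_sub, mul_div_mul_left _ _ hc]

theorem arc_endpoint_on_sector_ray
    (β θ : ℝ) (hβ0 : 0 < β) (hβ1 : β < 1) (hθ0 : 0 < θ) (hθπ : θ < π) :
    let γ := θ / 2 - arcsin (Real.sqrt β * Real.sin (θ / 2))
    0 < γ ∧ γ < θ / 2 ∧
      Real.tan (θ / 2) =
        (Real.sqrt β / (1 - β) * Real.sin γ) /
          (Real.sqrt β / (1 - β) * Real.cos γ - β / (1 - β)) := by
  intro γ
  have hs0 : 0 < √β := sqrt_pos.mpr hβ0
  have hs1 : √β < 1 := (sqrt_lt' one_pos).mpr (by simpa using hβ1)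
  obtain ⟨ha0, hat⟩ := arcsin_mul_sin_mem_Ioo hs0 hs1 (half_pos hθ0) (by linarith)
  have hγ0 : 0 < γ := sub_pos.mpr hat
  have hγt : γ < θ / 2 := sub_lt_self _ ha0
  refine ⟨hγ0, hγt, ?_⟩
  have hsinγ : sin γ ≠ 0 := (sin_pos_of_pos_of_lt_pi hγ0 (by linarith)).ne'
  have hcos : cos (θ / 2) ≠ 0 := (cos_pos_of_mem_Ioo ⟨by linarith, by linarith⟩).ne'
  have hsin0 : 0 < sin (θ / 2) := sin_pos_of_pos_of_lt_pi (half_pos hθ0) (by linarith)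
  have ha : sin (arcsin (√β * sin (θ / 2))) = √β * sin (θ / 2) :=
    sin_arcsin (by linarith [mul_pos hs0 hsin0]) (mul_le_one₀ hs1.le hsin0.le (sin_le_one _))
  have hβ : β / (1 - β) = √β / (1 - β) * √β := by
    rw [div_mul_eq_mul_div, mul_self_sqrt hβ0.le]
  rw [hβ, mul_div_mul_sub_mul (div_ne_zero hs0.ne' (sub_ne_zero.mpr hβ1.ne'))]
  exact tan_eq_sin_sub_div ha hcos hsinγ
end

section
/- Let β = 10^{0.1(δ+δ_o)}. The map (δ, δ_o) ↦ α(β | θ) (with α defined piecewise as in the paper: α = 4β(γ−√β sin γ)/((1−β)² tan(θ/2)) for β<1 with γ = θ/2 − arcsin(√β sin(θ/2)), α = 1 at β = 1, α = 2 − α(1/β|θ) for β>1) is continuous at δ + δ_o = 0 for each fixed θ ∈ (0, π). -/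
open Real

/-- The serving-area ratio formula for `β < 1`. -/
noncomputable def alphaLt (θ β : ℝ) : ℝ :=
  4 * β * ((θ / 2 - arcsin (Real.sqrt β * Real.sin (θ / 2))) -
      Real.sqrt β * Real.sin (θ / 2 - arcsin (Real.sqrt β * Real.sin (θ / 2)))) /
    ((1 - β) ^ 2 * Real.tan (θ / 2))

/-- The serving-area ratio `α(β ∣ θ)`, defined piecewise as in the paper. -/
noncomputable def alpha (θ β : ℝ) : ℝ :=
  if β < 1 then alphaLt θ β
  else if β = 1 then 1
  else 2 - alphaLt θ (1 / β)

/-!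
Write `t = θ / 2`, `s = √β` and `γ(s) = t - arcsin (s sin t)`, so that `γ(1) = 0` and
`γ'(1) = -tan t`. Splitting `γ - s sin γ = (γ - sin γ) - (s - 1) sin γ` and
`(1 - β)² = (s - 1)² (s + 1)²`, the first part is `O(γ³) = o((s - 1)²)`, while
`sin γ / (s - 1) → -tan t`; hence `α → 4 tan t / (4 tan t) = 1` as `β → 1`, `β ≠ 1`.
The branch `β > 1` is `2 - α(1/β)` and tends to `2 - 1 = 1` as well.
-/

open Filter Topology Set

lemma HasDerivAt.tendsto_div_sub_of_eq_zero {𝕜 : Type*} [NontriviallyNormedField 𝕜]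
    {f : 𝕜 → 𝕜} {f' a : 𝕜} (hf : HasDerivAt f f' a) (ha : f a = 0) :
    Tendsto (fun x => f x / (x - a)) (𝓝[≠] a) (𝓝 f') := by
  refine (hasDerivAt_iff_tendsto_slope.mp hf).congr fun x => ?_
  rw [slope_def_field, ha, sub_zero]

lemma tendsto_sub_sin_div_sq : Tendsto (fun x => (x - sin x) / x ^ 2) (𝓝 0) (𝓝 0) := by
  refine squeeze_zero_norm (a := fun x => |x| / 6) (fun x => ?_) ?_
  · rcases eq_or_ne x 0 with rfl | hx
    · simp
    rw [Real.norm_eq_abs, abs_div, abs_pow, div_le_iff₀ (by positivity)]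
    calc |x - sin x| ≤ |x| ^ 3 / 6 := abs_sub_sin_le x
      _ = |x| / 6 * |x| ^ 2 := by ring
  · simpa using (continuous_abs.div_const 6).tendsto (0 : ℝ)

lemma HasDerivAt.tendsto_sub_sin_div_sq_of_eq_zero {g : ℝ → ℝ} {g' a : ℝ} (hg : HasDerivAt g g' a)
    (ha : g a = 0) :
    Tendsto (fun x => (g x - Real.sin (g x)) / (x - a) ^ 2) (𝓝[≠] a) (𝓝 0) := by
  have hg_zero : Tendsto g (𝓝[≠] a) (𝓝 0) :=
    ha ▸ hg.continuousAt.tendsto.mono_left nhdsWithin_le_nhds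
  have := (tendsto_sub_sin_div_sq.comp hg_zero).mul ((hg.tendsto_div_sub_of_eq_zero ha).pow 2)
  rw [zero_mul] at this
  refine this.congr fun x => ?_
  by_cases hgx : g x = 0
  · simp [hgx]
  · simp only [Function.comp_apply, div_pow]
    field_simp

/-- The paper's angle `γ`, as a function of `t = θ / 2` and `s = √β`. -/
noncomputable def gammaAngle (t s : ℝ) : ℝ := t - arcsin (s * sin t)

section gammaAngle

variable {t : ℝ}

lemma gammaAngle_one (ht : t ∈ Icc (-(π / 2)) (π / 2)) : gammaAngle t 1 = 0 := by
  rw [gammaAngle, one_mul, arcsin_sin' ht, sub_self]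

lemma hasDerivAt_gammaAngle (ht : t ∈ Ioo (-(π / 2)) (π / 2)) :
    HasDerivAt (gammaAngle t) (-tan t) 1 := by
  have hcos : 0 < cos t := cos_pos_of_mem_Ioo ht
  have hsin : sin t ^ 2 < 1 := by nlinarith [sin_sq_add_cos_sq t]
  have hsqrt : √(1 - (1 * sin t) ^ 2) = cos t := by
    rw [one_mul, ← cos_sq', sqrt_sq hcos.le]
  have harcsin := hasDerivAt_arcsin (x := 1 * sin t) (by nlinarith) (by nlinarith)
  have hinner : HasDerivAt (fun s => s * sin t) (sin t) 1 := by
    simpa using (hasDerivAt_id (1 : ℝ)).mul_const (sin t)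
  refine ((harcsin.comp 1 hinner).const_sub t).congr_deriv ?_
  rw [hsqrt, tan_eq_sin_div_cos]
  ring

end gammaAngle

lemma alphaLt_sq (θ : ℝ) {s : ℝ} (hs : 0 ≤ s) :
    alphaLt θ (s ^ 2) = 4 * s ^ 2 * (gammaAngle (θ / 2) s - s * sin (gammaAngle (θ / 2) s)) /
      ((1 - s ^ 2) ^ 2 * tan (θ / 2)) := by
  rw [alphaLt, gammaAngle, sqrt_sq hs]

section limits

variable {θ : ℝ}

lemma tendsto_alphaLt_sq (hθ : θ ∈ Ioo (-π) π) (hθ0 : θ ≠ 0) :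
    Tendsto (fun s => alphaLt θ (s ^ 2)) (𝓝[≠] 1) (𝓝 1) := by
  have ht : θ / 2 ∈ Ioo (-(π / 2)) (π / 2) := ⟨by linarith [hθ.1], by linarith [hθ.2]⟩
  have htan : tan (θ / 2) ≠ 0 := by
    rw [tan_eq_sin_div_cos]
    refine div_ne_zero ?_ (cos_pos_of_mem_Ioo ht).ne'
    rw [Ne, sin_eq_zero_iff_of_lt_of_lt (by linarith [hθ.1, pi_pos]) (by linarith [hθ.2, pi_pos])]
    exact div_ne_zero hθ0 two_ne_zero
  set t := θ / 2
  set g := gammaAngle t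
  have hg1 : g 1 = 0 := gammaAngle_one (Ioo_subset_Icc_self ht)
  have hg : HasDerivAt g (-tan t) 1 := hasDerivAt_gammaAngle ht
  have hsin_g_div : Tendsto (fun s => sin (g s) / (s - 1)) (𝓝[≠] 1) (𝓝 (-tan t)) :=
    (hg.sin.congr_deriv (by rw [hg1, cos_zero, one_mul])).tendsto_div_sub_of_eq_zero
      (by rw [hg1, sin_zero])
  have hlim : Tendsto (fun s => 4 * s ^ 2 * ((g s - sin (g s)) / (s - 1) ^ 2 - sin (g s) / (s - 1)) /
      ((s + 1) ^ 2 * tan t)) (𝓝[≠] 1) (𝓝 (4 * 1 ^ 2 * (0 - -tan t) / ((1 + 1) ^ 2 * tan t))) := by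
    refine .div (.mul ?_ ((hg.tendsto_sub_sin_div_sq_of_eq_zero hg1).sub hsin_g_div)) ?_
      (by simpa using htan)
    · exact (tendsto_const_nhds.mul (tendsto_id.pow 2)).mono_left nhdsWithin_le_nhds
    · exact (((tendsto_id.add tendsto_const_nhds).pow 2).mul_const _).mono_left nhdsWithin_le_nhds
  rw [show 4 * 1 ^ 2 * (0 - -tan t) / ((1 + 1) ^ 2 * tan t) = 1 by field_simp; ring] at hlim
  refine hlim.congr' ?_
  filter_upwards [self_mem_nhdsWithin, mem_nhdsWithin_of_mem_nhds (Ioi_mem_nhds one_pos)]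
    with s (hs1 : s ≠ 1) (hs0 : 0 < s)
  have : s - 1 ≠ 0 := sub_ne_zero.mpr hs1
  have : s + 1 ≠ 0 := by positivity
  rw [alphaLt_sq θ hs0.le]
  change _ = 4 * s ^ 2 * (g s - s * sin (g s)) / ((1 - s ^ 2) ^ 2 * tan t)
  rw [show (1 - s ^ 2) ^ 2 = (s - 1) ^ 2 * (s + 1) ^ 2 by ring]
  field_simp
  ring

lemma tendsto_alphaLt_nhdsNE_one (hθ : θ ∈ Ioo (-π) π) (hθ0 : θ ≠ 0) :
    Tendsto (alphaLt θ) (𝓝[≠] 1) (𝓝 1) := by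
  have hpos : ∀ᶠ β in 𝓝[≠] (1 : ℝ), 0 < β := mem_nhdsWithin_of_mem_nhds (Ioi_mem_nhds one_pos)
  have hsqrt : Tendsto (√·) (𝓝[≠] 1) (𝓝[≠] 1) := by
    refine tendsto_nhdsWithin_iff.mpr ⟨?_, ?_⟩
    · simpa using continuous_sqrt.tendsto (1 : ℝ) |>.mono_left nhdsWithin_le_nhds
    · filter_upwards [self_mem_nhdsWithin, hpos] with β (hβ : β ≠ 1) hβ0
      exact fun h => hβ (sqrt_eq_one.mp h)
  refine ((tendsto_alphaLt_sq hθ hθ0).comp hsqrt).congr' ?_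
  filter_upwards [hpos] with β hβ0
  simp [sq_sqrt hβ0.le]

lemma continuousAt_alpha_one (hθ : θ ∈ Ioo (-π) π) (hθ0 : θ ≠ 0) : ContinuousAt (alpha θ) 1 := by
  have hlim := tendsto_alphaLt_nhdsNE_one hθ hθ0
  have hinv : Tendsto (fun β : ℝ => 1 / β) (𝓝[>] 1) (𝓝[≠] 1) := by
    refine tendsto_nhdsWithin_iff.mpr ⟨?_, ?_⟩
    · simpa using (continuousAt_inv₀ one_ne_zero).tendsto.mono_left
        (nhdsWithin_le_nhds (a := (1 : ℝ)))
    · filter_upwards [self_mem_nhdsWithin] with β (hβ : 1 < β)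
      exact ((div_lt_one (one_pos.trans hβ)).mpr hβ).ne
  have halpha : alpha θ 1 = 1 := by simp [alpha]
  rw [← continuousWithinAt_compl_self, ContinuousWithinAt, halpha, ← nhdsLT_sup_nhdsGT,
    tendsto_sup]
  constructor
  · refine (hlim.mono_left (nhdsWithin_mono _ fun β hβ => ne_of_lt hβ)).congr' ?_
    filter_upwards [self_mem_nhdsWithin] with β (hβ : β < 1)
    simp [alpha, hβ]
  · have := (tendsto_const_nhds (x := (2 : ℝ))).sub (hlim.comp hinv)
    norm_num at this
    refine this.congr' ?_
    filter_upwards [self_mem_nhdsWithin] with β (hβ : 1 < β)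
    simp [alpha, not_lt.mpr hβ.le, hβ.ne']

end limits

theorem multiplier_continuous_at_no_adjustment
    (θ : ℝ) (hθ0 : 0 < θ) (hθπ : θ < π) (p : ℝ × ℝ) (hp : p.1 + p.2 = 0) :
    ContinuousAt (fun q : ℝ × ℝ => alpha θ ((10 : ℝ) ^ (0.1 * (q.1 + q.2)))) p := by
  have hβ : ContinuousAt (fun q : ℝ × ℝ => (10 : ℝ) ^ (0.1 * (q.1 + q.2))) p := by
    fun_prop (disch := norm_num)
  have hβp : (10 : ℝ) ^ (0.1 * (p.1 + p.2)) = 1 := by rw [hp, mul_zero, rpow_zero]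
  exact (continuousAt_alpha_one ⟨by linarith [pi_pos], hθπ⟩ hθ0.ne').comp_of_eq hβ hβp
end
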